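/- With μ_t as above (k > −1, t ∈ (1/2,2)), for 1/2 < s ≤ t < 2 and x ∈ [0, 1/t), Ψ^{wds}_{μ_v}(x) = ((k+1)/(k+2)) · (v^{k+1}/(1 − (vx)^{k+1})) · (2^{k+1}(2v+1) − x^{k+2}) is non-decreasing in v on [s,t]; in particular Ψ^{wds}_{μ_s}(x) ≤ Ψ^{wds}_{μ_t}(x). -/

import Mathlib

open MeasureTheory Set Filter

noncomputable def meanM (μ : Measure ℝ) : ℝ := ∫ y, y ∂μ

noncomputable def rSupE (μ : Measure ℝ) : EReal :=
  sInf ((fun z : ℝ => (z : EReal)) '' {z : ℝ | μ (Ici z) = 0})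

noncomputable def psiWds (μ : Measure ℝ) (x : ℝ) : EReal :=
  if (x : EReal) < rSupE μ then
    ((((∫ y in Ici x, y ∂μ) - meanM μ) / (μ (Ici x)).toReal : ℝ) : EReal)
  else ⊤

noncomputable def Kfun (μ : Measure ℝ) (x : ℝ) : ℝ :=
  (∫ y in Ici x, (y - x) ∂μ) - meanM μ

noncomputable def alphaK (k t : ℝ) : ℝ :=
  ((k + 1) / (k + 2)) * ((2 * t) ^ (k + 2) * (2 * t + 1)) / (2 - t)

noncomputable def muK (k t : ℝ) : Measure ℝ :=
  MeasureTheory.volume.withDensity (fun y => ENNReal.ofReal (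
    if y ∈ Ico (-(alphaK k t)) 0 then (2 - t) / (2 * alphaK k t)
    else if y ∈ Ico (0 : ℝ) (1 / t) then ((k + 1) * t ^ (k + 2) / 2) * y ^ k
    else 0))

noncomputable def psiFormula (k x v : ℝ) : ℝ :=
  ((k + 1) / (k + 2)) * (v ^ (k + 1) / (1 - (v * x) ^ (k + 1)))
    * (2 ^ (k + 1) * (2 * v + 1) - x ^ (k + 2))

/-!
For `0 ≤ x < 1 / v` the half-line `[x, ∞)` only meets the power-law part `c y ^ k` of the
density of `μ_v`, so `μ_v [x, ∞)` and `∫_{[x, ∞)} y dμ_v` are explicit power integrals;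
together with the mean, to which the uniform part contributes `-(2 - v) α / 4`, the ratio
collapses to `psiFormula`.
Monotonicity in `v` holds because `psiFormula` is a positive multiple of the product of the two
nonnegative nondecreasing factors `v ^ (k + 1) / (1 - (v x) ^ (k + 1))` and
`2 ^ (k + 1) (2 v + 1) - x ^ (k + 2)`.
-/

theorem integral_withDensity_ofReal {X : Type*} [MeasurableSpace X] {μ : Measure X} {f : X → ℝ}
    (hf : Measurable f) (hf0 : ∀ x, 0 ≤ f x) (g : X → ℝ) :
    ∫ x, g x ∂μ.withDensity (fun x => ENNReal.ofReal (f x)) = ∫ x, f x * g x ∂μ := by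
  rw [integral_withDensity_eq_integral_toReal_smul hf.ennreal_ofReal
    (ae_of_all _ fun _ => ENNReal.ofReal_lt_top)]
  simp only [ENNReal.toReal_ofReal (hf0 _), smul_eq_mul]

theorem setIntegral_Ici_indicator_Ico {f : ℝ → ℝ} {a x b : ℝ} (hax : a ≤ x)
    (hxb : x ≤ b) :
    ∫ y in Ici x, (Ico a b).indicator f y = ∫ y in x..b, f y := by
  have hset : Ici x ∩ Ico a b = Ico x b := by
    ext y
    simp only [mem_inter_iff, mem_Ici, mem_Ico]
    exact ⟨fun h => ⟨h.1, h.2.2⟩, fun h => ⟨h.1, hax.trans h.1, h.2⟩⟩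
  rw [setIntegral_indicator measurableSet_Ico, hset, integral_Ico_eq_integral_Ioc,
    intervalIntegral.integral_of_le hxb]

theorem integral_indicator_Ico {f : ℝ → ℝ} {a b : ℝ} (hab : a ≤ b) :
    ∫ y, (Ico a b).indicator f y = ∫ y in a..b, f y := by
  rw [integral_indicator measurableSet_Ico, integral_Ico_eq_integral_Ioc,
    intervalIntegral.integral_of_le hab]

theorem rpow_mul_one_div_rpow_sub {v x : ℝ} (hv : 0 < v) (hx : 0 ≤ x) (r : ℝ) :
    v ^ r * ((1 / v) ^ r - x ^ r) = 1 - (v * x) ^ r := by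
  rw [mul_sub, ← Real.mul_rpow hv.le (by positivity), mul_one_div_cancel hv.ne', Real.one_rpow,
    Real.mul_rpow hv.le hx]

theorem coe_le_rSupE {μ : Measure ℝ} {b : ℝ} (h : ∀ z < b, μ (Ici z) ≠ 0) :
    (b : EReal) ≤ rSupE μ := by
  refine le_sInf ?_
  rintro _ ⟨z, hz, rfl⟩
  exact EReal.coe_le_coe_iff.2 (not_lt.1 fun hzb => h z hzb hz)

theorem alphaK_pos {k v : ℝ} (hk : -1 < k) (hv : 0 < v) (hv2 : v < 2) : 0 < alphaK k v := by
  unfold alphaK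
  have : 0 < (2 * v) ^ (k + 2) := Real.rpow_pos_of_pos (by positivity) _
  have : 0 < k + 1 := by linarith
  have : 0 < k + 2 := by linarith
  have : 0 < 2 - v := by linarith
  positivity

noncomputable def muKDensity (k v : ℝ) : ℝ → ℝ :=
  (Ico (-alphaK k v) 0).indicator (fun _ => (2 - v) / (2 * alphaK k v)) +
    (Ico 0 (1 / v)).indicator (fun y => (k + 1) * v ^ (k + 2) / 2 * y ^ k)

theorem muK_eq_withDensity (k v : ℝ) :
    muK k v = volume.withDensity (fun y => ENNReal.ofReal (muKDensity k v y)) := by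
  unfold muK muKDensity
  congr 1
  funext y
  by_cases hneg : y ∈ Ico (-alphaK k v) 0
  · have hpos : y ∉ Ico (0 : ℝ) (1 / v) := fun h => (not_le.2 hneg.2) h.1
    simp only [Pi.add_apply, indicator_apply, hneg, hpos, if_true, if_false, add_zero]
  · by_cases hpos : y ∈ Ico (0 : ℝ) (1 / v) <;>
      simp only [Pi.add_apply, indicator_apply, hneg, hpos, if_true, if_false, zero_add]

theorem measurable_muKDensity (k v : ℝ) : Measurable (muKDensity k v) :=
  (measurable_const.indicator measurableSet_Ico).add
    (((measurable_id.pow_const k).const_mul _).indicator measurableSet_Ico)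

theorem muKDensity_nonneg {k v : ℝ} (hk : -1 < k) (hv : 0 < v) (hv2 : v < 2) (y : ℝ) :
    0 ≤ muKDensity k v y := by
  have hα := alphaK_pos hk hv hv2
  refine add_nonneg (indicator_nonneg (fun _ _ => div_nonneg (by linarith) (by positivity)) _)
    (indicator_nonneg (fun y hy => ?_) _)
  have : 0 ≤ y ^ k := Real.rpow_nonneg hy.1 k
  have : 0 < k + 1 := by linarith
  positivity

theorem muKDensity_eq_indicator_of_nonneg {k v y : ℝ} (hy : 0 ≤ y) :
    muKDensity k v y =
      (Ico 0 (1 / v)).indicator (fun y => (k + 1) * v ^ (k + 2) / 2 * y ^ k) y := by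
  simp [muKDensity, indicator_of_notMem (fun h : y ∈ Ico (-alphaK k v) 0 => not_le.2 h.2 hy)]

section muK

variable {k v : ℝ}

theorem setIntegral_Ici_muK (hk : -1 < k) (hv : 0 < v) (hv2 : v < 2) {x : ℝ} (hx0 : 0 ≤ x)
    (hx : x ≤ 1 / v) (g : ℝ → ℝ) :
    ∫ y in Ici x, g y ∂muK k v =
      ∫ y in x..1 / v, (k + 1) * v ^ (k + 2) / 2 * y ^ k * g y := by
  rw [muK_eq_withDensity, restrict_withDensity measurableSet_Ici,
    integral_withDensity_ofReal (measurable_muKDensity k v) (muKDensity_nonneg hk hv hv2),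
    ← setIntegral_Ici_indicator_Ico hx0 hx]
  refine setIntegral_congr_fun measurableSet_Ici fun y hy => ?_
  rw [muKDensity_eq_indicator_of_nonneg (hx0.trans hy), ← indicator_mul_left]

theorem integral_powerLawDensity (hk : -1 < k) (hv : 0 < v) {x : ℝ} (hx0 : 0 ≤ x) :
    ∫ y in x..1 / v, (k + 1) * v ^ (k + 2) / 2 * y ^ k = v / 2 * (1 - (v * x) ^ (k + 1)) := by
  have hk1 : k + 1 ≠ 0 := by linarith
  rw [intervalIntegral.integral_const_mul, integral_rpow (Or.inl hk),
    ← rpow_mul_one_div_rpow_sub hv hx0, show k + 2 = (k + 1) + 1 by ring,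
    Real.rpow_add_one hv.ne']
  field_simp

theorem integral_powerLawDensity_mul_id (hk : -1 < k) (hv : 0 < v) {x : ℝ} (hx0 : 0 ≤ x) :
    ∫ y in x..1 / v, (k + 1) * v ^ (k + 2) / 2 * y ^ k * y
      = (k + 1) / (2 * (k + 2)) * (1 - (v * x) ^ (k + 2)) := by
  have hk2 : k + 2 ≠ 0 := by linarith
  have hpow : ∀ y ∈ uIcc x (1 / v), (k + 1) * v ^ (k + 2) / 2 * y ^ k * y
      = (k + 1) * v ^ (k + 2) / 2 * y ^ (k + 1) := fun y hy => by
    have hy : 0 ≤ y := le_trans (le_min hx0 (by positivity)) hy.1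
    rw [Real.rpow_add_one' hy (by linarith), mul_assoc]
  rw [intervalIntegral.integral_congr hpow, intervalIntegral.integral_const_mul,
    integral_rpow (Or.inl (by linarith)), show k + 1 + 1 = k + 2 by ring,
    ← rpow_mul_one_div_rpow_sub hv hx0]
  field_simp

theorem muK_real_Ici (hk : -1 < k) (hv : 0 < v) (hv2 : v < 2) {x : ℝ} (hx0 : 0 ≤ x)
    (hx : x ≤ 1 / v) : (muK k v).real (Ici x) = v / 2 * (1 - (v * x) ^ (k + 1)) := by
  have h := setIntegral_Ici_muK hk hv hv2 hx0 hx fun _ => 1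
  simp only [setIntegral_const, smul_eq_mul, mul_one] at h
  rw [h, integral_powerLawDensity hk hv hx0]

theorem setIntegral_Ici_id_muK (hk : -1 < k) (hv : 0 < v) (hv2 : v < 2) {x : ℝ} (hx0 : 0 ≤ x)
    (hx : x ≤ 1 / v) :
    ∫ y in Ici x, y ∂muK k v = (k + 1) / (2 * (k + 2)) * (1 - (v * x) ^ (k + 2)) := by
  rw [setIntegral_Ici_muK hk hv hv2 hx0 hx, integral_powerLawDensity_mul_id hk hv hx0]

theorem meanM_muK (hk : -1 < k) (hv : 0 < v) (hv2 : v < 2) :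
    meanM (muK k v) = (k + 1) / (2 * (k + 2)) * (1 - (2 * v) ^ (k + 2) * (2 * v + 1) / 2) := by
  have hα := alphaK_pos hk hv hv2
  set c := (k + 1) * v ^ (k + 2) / 2 with hc
  have hsplit : ∀ y, muKDensity k v y * y =
      (Ico (-alphaK k v) 0).indicator (fun y => (2 - v) / (2 * alphaK k v) * y) y +
        (Ico 0 (1 / v)).indicator (fun y => c * y ^ k * y) y := by
    intro y
    simp only [muKDensity, Pi.add_apply, add_mul, indicator_apply, ite_mul, zero_mul, hc]
  have hneg_int : IntegrableOn (fun y => (2 - v) / (2 * alphaK k v) * y) (Ico (-alphaK k v) 0) :=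
    (continuous_const.mul continuous_id).integrableOn_Icc.mono_set Ico_subset_Icc_self
  have hpos_int : IntegrableOn (fun y => c * y ^ k * y) (Ico 0 (1 / v)) := by
    refine IntegrableOn.mono_set ?_ Ico_subset_Icc_self
    rw [integrableOn_Icc_iff_integrableOn_Ioc,
      ← intervalIntegrable_iff_integrableOn_Ioc_of_le (by positivity)]
    exact ((intervalIntegral.intervalIntegrable_rpow' hk).const_mul c).mul_continuousOn
      continuousOn_id
  rw [meanM, muK_eq_withDensity,
    integral_withDensity_ofReal (measurable_muKDensity k v) (muKDensity_nonneg hk hv hv2),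
    integral_congr_ae (ae_of_all _ hsplit),
    integral_add (hneg_int.integrable_indicator measurableSet_Ico)
      (hpos_int.integrable_indicator measurableSet_Ico),
    integral_indicator_Ico (by linarith), integral_indicator_Ico (by positivity),
    intervalIntegral.integral_const_mul, integral_id,
    integral_powerLawDensity_mul_id hk hv le_rfl, mul_zero,
    Real.zero_rpow (by linarith)]
  unfold alphaK at hα ⊢
  have : k + 1 ≠ 0 := by linarith
  have : k + 2 ≠ 0 := by linarith
  have : 2 - v ≠ 0 := by linarith
  field_simp
  ring

theorem muK_Ici_ne_zero (hk : -1 < k) (hv : 0 < v) (hv2 : v < 2) {z : ℝ} (hz : z < 1 / v) :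
    muK k v (Ici z) ≠ 0 := by
  intro hzero
  set a := max z 0
  have ha0 : 0 ≤ a := le_max_right _ _
  have ha : a < 1 / v := max_lt hz (by positivity)
  have hva : (v * a) ^ (k + 1) < 1 :=
    Real.rpow_lt_one (by positivity) ((lt_div_iff₀' hv).1 ha) (by linarith)
  have hreal : (muK k v).real (Ici a) = 0 := by
    rw [measureReal_def, measure_mono_null (Ici_subset_Ici.2 (le_max_left _ _)) hzero,
      ENNReal.toReal_zero]
  rw [muK_real_Ici hk hv hv2 ha0 ha.le] at hreal
  nlinarith

theorem psiWds_muK (hk : -1 < k) (hv : 0 < v) (hv2 : v < 2) {x : ℝ} (hx0 : 0 ≤ x)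
    (hx : x < 1 / v) : psiWds (muK k v) x = ((psiFormula k x v : ℝ) : EReal) := by
  have hvx : (v * x) ^ (k + 1) < 1 :=
    Real.rpow_lt_one (by positivity) ((lt_div_iff₀' hv).1 hx) (by linarith)
  rw [psiWds, if_pos ((EReal.coe_lt_coe_iff.2 hx).trans_le
      (coe_le_rSupE fun z hz => muK_Ici_ne_zero hk hv hv2 hz)),
    ← measureReal_def, setIntegral_Ici_id_muK hk hv hv2 hx0 hx.le, meanM_muK hk hv hv2,
    muK_real_Ici hk hv hv2 hx0 hx.le, EReal.coe_eq_coe_iff, psiFormula,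
    show k + 2 = k + 1 + 1 by ring, Real.mul_rpow hv.le hx0 (z := k + 1 + 1),
    Real.mul_rpow zero_le_two hv.le, Real.rpow_add_one two_ne_zero (k + 1),
    Real.rpow_add_one hv.ne' (k + 1)]
  have : 1 - (v * x) ^ (k + 1) ≠ 0 := by linarith
  have : k + 1 + 1 ≠ 0 := by linarith
  field_simp
  ring

end muK

theorem psiFormula_le_psiFormula {k x v w : ℝ} (hk : -1 < k) (hx0 : 0 ≤ x) (hv : 1 / 2 < v)
    (hvw : v ≤ w) (hx : x < 1 / w) : psiFormula k x v ≤ psiFormula k x w := by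
  have hv0 : 0 < v := by linarith
  have hw0 : 0 < w := by linarith
  have hk1 : 0 < k + 1 := by linarith
  have hwx : 0 < 1 - (w * x) ^ (k + 1) := by
    have := Real.rpow_lt_one (by positivity) ((lt_div_iff₀' hw0).1 hx) hk1
    linarith
  have hvwx : (v * x) ^ (k + 1) ≤ (w * x) ^ (k + 1) :=
    Real.rpow_le_rpow (by positivity) (mul_le_mul_of_nonneg_right hvw hx0) hk1.le
  have hfrac : v ^ (k + 1) / (1 - (v * x) ^ (k + 1)) ≤ w ^ (k + 1) / (1 - (w * x) ^ (k + 1)) :=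
    div_le_div₀ (by positivity) (Real.rpow_le_rpow hv0.le hvw hk1.le) hwx (by linarith)
  have hx2 : x < 2 := hx.trans_le ((div_le_iff₀ hw0).2 (by linarith))
  have hpow : x ^ (k + 2) ≤ 2 ^ (k + 1) * (2 * v + 1) := calc
    x ^ (k + 2) ≤ 2 ^ (k + 2) := Real.rpow_le_rpow hx0 hx2.le (by linarith)
    _ = 2 ^ (k + 1) * 2 := by rw [show k + 2 = k + 1 + 1 by ring, Real.rpow_add_one two_ne_zero]
    _ ≤ 2 ^ (k + 1) * (2 * v + 1) := by gcongr; linarith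
  have hlin : 2 ^ (k + 1) * (2 * v + 1) - x ^ (k + 2) ≤
      2 ^ (k + 1) * (2 * w + 1) - x ^ (k + 2) := by
    gcongr
  have hC : 0 ≤ (k + 1) / (k + 2) := div_nonneg hk1.le (by linarith)
  exact mul_le_mul (mul_le_mul_of_nonneg_left hfrac hC) hlin (by linarith)
    (mul_nonneg hC (div_nonneg (by positivity) hwx.le))

theorem stmt18 (k : ℝ) (hk : -1 < k) (s t x : ℝ)
    (hs : 1/2 < s) (hst : s ≤ t) (ht : t < 2)
    (hx0 : 0 ≤ x) (hx : x < 1 / t) :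
    (∀ v ∈ Icc s t, psiWds (muK k v) x = ((psiFormula k x v : ℝ) : EReal)) ∧
    (∀ v ∈ Icc s t, ∀ w ∈ Icc s t, v ≤ w → psiFormula k x v ≤ psiFormula k x w) ∧
    psiWds (muK k s) x ≤ psiWds (muK k t) x := by
  have hxv : ∀ v ∈ Icc s t, x < 1 / v := fun v hv =>
    hx.trans_le (one_div_le_one_div_of_le (by linarith [hv.1]) hv.2)
  have hformula : ∀ v ∈ Icc s t, psiWds (muK k v) x = ((psiFormula k x v : ℝ) : EReal) :=
    fun v hv => psiWds_muK hk (by linarith [hv.1]) (hv.2.trans_lt ht) hx0 (hxv v hv)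
  have hmono :
      ∀ v ∈ Icc s t, ∀ w ∈ Icc s t, v ≤ w → psiFormula k x v ≤ psiFormula k x w :=
    fun v hv w hw hvw => psiFormula_le_psiFormula hk hx0 (hs.trans_le hv.1) hvw (hxv w hw)
  have hsI : s ∈ Icc s t := ⟨le_rfl, hst⟩
  have htI : t ∈ Icc s t := ⟨hst, le_rfl⟩
  refine ⟨hformula, hmono, ?_⟩
  rw [hformula s hsI, hformula t htI, EReal.coe_le_coe_iff]
  exact hmono s hsI t htI hst
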